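/- arXiv:1511.07632 — 2 statements merged into one kernel-verified Lean document; each statement's English description precedes it below -/
import Mathlib

section
/- Let E be a Banach space with a normalized 1-unconditional basis (e_n) with biorthogonal functionals (e_n*), and let X = (⊕_{n=1}^∞ c0)_E be the E-direct sum of countably many copies of c0. If t_1,…,t_k > 0 are such that ‖Σ_{i=1}^k t_i e_i*‖_{E*} ≤ 1, then ι_{t_1}ι_{t_2}⋯ι_{t_k} B_{X*} ≠ ∅. -/
open Filter Topology Set
open scoped ENNReal NNReal

noncomputable section

/-- The `ε`-Szlenk derivation of a subset of the dual space, w.r.t. the weak* topology. -/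
def szlenkDeriv {X : Type*} [NormedAddCommGroup X] [NormedSpace ℝ X] (ε : ℝ)
    (K : Set (StrongDual ℝ X)) : Set (StrongDual ℝ X) :=
  {f | f ∈ K ∧ ∀ U : Set (WeakDual ℝ X), IsOpen U →
    StrongDual.toWeakDual f ∈ U →
    ε < Metric.diam {g | g ∈ K ∧ StrongDual.toWeakDual g ∈ U}}

/-- Iterated Szlenk derivations `ι_{ε₁}⋯ι_{εₙ} K` for a list `[ε₁, …, εₙ]`. -/
def szlenkDerivList {X : Type*} [NormedAddCommGroup X] [NormedSpace ℝ X] (l : List ℝ)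
    (K : Set (StrongDual ℝ X)) : Set (StrongDual ℝ X) :=
  l.foldr szlenkDeriv K

/-- The closed unit ball of the dual space. -/
def dualUnitBall (X : Type*) [NormedAddCommGroup X] [NormedSpace ℝ X] :
    Set (StrongDual ℝ X) :=
  Metric.closedBall 0 1

/-- `X` has summable Szlenk index with constant `M`. -/
def HasSummableSzlenkWith (X : Type*) [NormedAddCommGroup X] [NormedSpace ℝ X] (M : ℝ) : Prop :=
  ∀ l : List ℝ, (∀ ε ∈ l, 0 < ε) → (szlenkDerivList l (dualUnitBall X)).Nonempty → l.sum ≤ M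

/-- `X` has summable Szlenk index. -/
def HasSummableSzlenk (X : Type*) [NormedAddCommGroup X] [NormedSpace ℝ X] : Prop :=
  ∃ M > 0, HasSummableSzlenkWith X M

/-- When some finite iterate of the Szlenk derivation kills the dual ball, the ε-Szlenk index
`Sz(X, ε)` is the least `n : ℕ` with `ι_ε^n B_{X*} = ∅`. -/
def szlenkIdx (X : Type*) [NormedAddCommGroup X] [NormedSpace ℝ X] (ε : ℝ) : ℕ :=
  sInf {n : ℕ | (szlenkDeriv ε)^[n] (dualUnitBall X) = ∅}

/-- `Sz(X) ≤ ω`: the ε-Szlenk index is finite for every ε > 0. -/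
def SzlenkLeOmega (X : Type*) [NormedAddCommGroup X] [NormedSpace ℝ X] : Prop :=
  ∀ ε : ℝ, 0 < ε → ∃ n : ℕ, (szlenkDeriv ε)^[n] (dualUnitBall X) = ∅

/-- `Sz(X) = ω`: finite ε-Szlenk indices, unbounded as ε → 0. -/
def SzlenkEqOmega (X : Type*) [NormedAddCommGroup X] [NormedSpace ℝ X] : Prop :=
  SzlenkLeOmega X ∧ ∀ N : ℕ, ∃ ε : ℝ, 0 < ε ∧ ((szlenkDeriv ε)^[N] (dualUnitBall X)).Nonempty

/-- `X` has Szlenk power type `v`: `log Sz(X,ε)/|log ε| → v` as `ε → 0⁺`. -/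
def HasSzlenkPowerType (X : Type*) [NormedAddCommGroup X] [NormedSpace ℝ X] (v : ℝ) : Prop :=
  Tendsto (fun ε : ℝ => Real.log (szlenkIdx X ε) / |Real.log ε|) (𝓝[>] (0:ℝ)) (𝓝 v)

/-- `(Σᵢ |a i|^p)^{1/p}`, the maximum of the `|a i|` when `p = ∞`. -/
def pNorm (p : ℝ≥0∞) {ι : Type*} [Fintype ι] (a : ι → ℝ) : ℝ :=
  if p = ∞ then ((Finset.univ.sup fun i => ‖a i‖₊ : ℝ≥0) : ℝ)
  else (∑ i, |a i| ^ p.toReal) ^ (1 / p.toReal)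

/-- A normed space `Z` with coordinate functionals `coord` is `C`-asymptotic `ℓ_p`:
every block sequence `x₁, …, xₙ` of finitely supported vectors with successive supports
contained in `[n, ∞)` (1-based basis indexing; index `m : ℕ` is the `(m+1)`-st basis vector)
satisfies `C⁻¹ (Σ‖xⱼ‖^p)^{1/p} ≤ ‖Σ xⱼ‖ ≤ C (Σ‖xⱼ‖^p)^{1/p}`. -/
def IsAsymptoticLp (p : ℝ≥0∞) (C : ℝ) {Z : Type*} [NormedAddCommGroup Z]
    (coord : ℕ → Z → ℝ) : Prop :=
  ∀ (n : ℕ) (x : Fin n → Z),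
    (∀ j, {m | coord m (x j) ≠ 0}.Finite) →
    (∀ j m, coord m (x j) ≠ 0 → n ≤ m + 1) →
    (∀ (j k : Fin n), j < k → ∀ m m', coord m (x j) ≠ 0 → coord m' (x k) ≠ 0 → m < m') →
    C⁻¹ * pNorm p (fun j => ‖x j‖) ≤ ‖∑ j, x j‖ ∧
      ‖∑ j, x j‖ ≤ C * pNorm p (fun j => ‖x j‖)

/-- `(e, e')` is a 1-unconditional Schauder basis of `E` with biorthogonal functionals `e'`. -/
structure IsBasis1Unconditional {E : Type*} [NormedAddCommGroup E] [NormedSpace ℝ E]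
    (e : ℕ → E) (e' : ℕ → StrongDual ℝ E) : Prop where
  biorth : ∀ m n, e' m (e n) = if m = n then 1 else 0
  expansion : ∀ x : E, HasSum (fun n => e' n x • e n) x
  unconditional : ∀ (x : E) (σ : ℕ → ℝ), (∀ n, σ n = 1 ∨ σ n = -1) →
    ∃ y : E, HasSum (fun n => (σ n * e' n x) • e n) y ∧ ‖y‖ = ‖x‖

/-- The basis `e` of `E` is shrinking: the norm of the restriction of any functional to the
closed span of the tail of the basis tends to `0`. -/
def ShrinkingBasis {E : Type*} [NormedAddCommGroup E] [NormedSpace ℝ E] (e : ℕ → E) : Prop :=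
  ∀ f : StrongDual ℝ E,
    Tendsto (fun k =>
      ‖f.comp ((Submodule.span ℝ (e '' Set.Ici k)).topologicalClosure).subtypeL‖)
      atTop (𝓝 0)

/-- `T` realizes `Y` as the `E`-direct sum `(⊕ₙ Xₙ)_E` with respect to the basis `e`. -/
structure IsDirectSumE {E : Type*} [NormedAddCommGroup E] [NormedSpace ℝ E] (e : ℕ → E)
    (X : ℕ → Type*) [∀ n, NormedAddCommGroup (X n)] [∀ n, NormedSpace ℝ (X n)]
    {Y : Type*} [NormedAddCommGroup Y] [NormedSpace ℝ Y]
    (T : Y →ₗ[ℝ] ∀ n, X n) : Prop where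
  range_eq : Set.range T = {x | Summable fun n => ‖x n‖ • e n}
  norm_eq : ∀ y, ‖y‖ = ‖∑' n, ‖T y n‖ • e n‖

/-- `T` realizes `Y` as the c₀-sum `(⊕ₙ Xₙ)_{c₀}`. -/
structure IsC0Sum (X : ℕ → Type*) [∀ n, NormedAddCommGroup (X n)] [∀ n, NormedSpace ℝ (X n)]
    {Y : Type*} [NormedAddCommGroup Y] [NormedSpace ℝ Y] (T : Y →ₗ[ℝ] ∀ n, X n) : Prop where
  range_eq : Set.range T = {x | Tendsto (fun n => ‖x n‖) atTop (𝓝 0)}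
  norm_eq : ∀ y, ‖y‖ = ⨆ n, ‖T y n‖

/-- `T` realizes `Y` as the `ℓ_p`-sum `(⊕ₙ Xₙ)_{ℓ_p}`. -/
structure IsLpSum (p : ℝ) (X : ℕ → Type*) [∀ n, NormedAddCommGroup (X n)]
    [∀ n, NormedSpace ℝ (X n)] {Y : Type*} [NormedAddCommGroup Y] [NormedSpace ℝ Y]
    (T : Y →ₗ[ℝ] ∀ n, X n) : Prop where
  range_eq : Set.range T = {x | Summable fun n => ‖x n‖ ^ p}
  norm_eq : ∀ y, ‖y‖ = (∑' n, ‖T y n‖ ^ p) ^ (1/p)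

/-- `ν` is a norm on `X`. -/
structure IsNormOn {X : Type*} [NormedAddCommGroup X] [NormedSpace ℝ X] (ν : X → ℝ) : Prop where
  add_le : ∀ x y, ν (x + y) ≤ ν x + ν y
  smul_eq : ∀ (a : ℝ) (x : X), ν (a • x) = |a| * ν x
  eq_zero_iff : ∀ x : X, ν x = 0 ↔ x = 0

/-- The dual norm on `X*` corresponding to the (equivalent) norm `ν` on `X`. -/
def dualNormOf {X : Type*} [NormedAddCommGroup X] [NormedSpace ℝ X]
    (ν : X → ℝ) (f : StrongDual ℝ X) : ℝ :=
  sSup {r | ∃ x : X, ν x ≤ 1 ∧ r = |f x|}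

/-- `sup_n C_q(X_n) < ∞`: a common constant `c` with `Sz(Xₙ, ε) ≤ c ε^{-q}`. -/
def PowerTypeBddWith (X : ℕ → Type*) [∀ n, NormedAddCommGroup (X n)]
    [∀ n, NormedSpace ℝ (X n)] (q : ℝ) : Prop :=
  ∃ c : ℝ, ∀ n, ∀ ε ∈ Set.Ioo (0:ℝ) 1, (szlenkIdx (X n) ε : ℝ) ≤ c * ε ^ (-q)

/-- The fast growing hierarchy: `g 0 n = n + 1`, `g (k+1) n = (g k)^[n] n`. -/
def fastGrowing : ℕ → ℕ → ℕ
  | 0, n => n + 1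
  | k+1, n => (fastGrowing k)^[n] n

end

/-
Write `φ_{j,m}(y) = (y_j)(m)` for the coordinate functionals of `(⊕ₙ c₀)_E`. For fixed `j` they
have norm one and tend weak* to `0` as `m → ∞`. Suppose every perturbation `g + Σᵢ sᵢ φ_{i,mᵢ}`
with `|sᵢ| ≤ tᵢ` lies in a bounded set `K`. By induction on `k`, each `g + s φ_{1,m}` with
`|s| ≤ t₁` lies in `D = ι_{t₂}⋯ι_{t_k} K`; the pairs `g ± t₁ φ_{1,m}` lie in `D`, converge weak* to
`g` and are `2 t₁` apart, so `g ∈ ι_{t₁} D`. For `g = 0` and `K = B_{X*}` the perturbations are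
bounded by `|Σᵢ sᵢ (y_i)(mᵢ)| ≤ Σᵢ tᵢ ‖y_i‖ = (Σᵢ tᵢ eᵢ*)(Σₙ ‖y_n‖ eₙ) ≤ ‖Σᵢ tᵢ eᵢ*‖ ‖y‖`.
-/

open scoped ZeroAtInfty

section SzlenkDeriv

variable {X : Type*} [NormedAddCommGroup X] [NormedSpace ℝ X]

lemma szlenkDerivList_subset (l : List ℝ) (K : Set (StrongDual ℝ X)) :
    szlenkDerivList l K ⊆ K := by
  induction l with
  | nil => exact subset_rfl
  | cons a l ih => exact fun f hf => ih hf.1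

lemma tendsto_toWeakDual_add_smul {ι : Type*} {l : Filter ι} {ψ : ι → StrongDual ℝ X}
    (hψ : Tendsto (fun m => StrongDual.toWeakDual (ψ m)) l (𝓝 0)) (g : StrongDual ℝ X) (s : ℝ) :
    Tendsto (fun m => StrongDual.toWeakDual (g + s • ψ m)) l (𝓝 (StrongDual.toWeakDual g)) := by
  simpa using (hψ.const_smul s).const_add (StrongDual.toWeakDual g)

lemma mem_szlenkDeriv_of_forall_add_smul_mem {K : Set (StrongDual ℝ X)}
    (hK : Bornology.IsBounded K) {ε : ℝ} (hε : 0 < ε) {ψ : ℕ → StrongDual ℝ X}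
    (hψ : Tendsto (fun m => StrongDual.toWeakDual (ψ m)) atTop (𝓝 0))
    (hψ_norm : ∀ m, 1 / 2 < ‖ψ m‖) {g : StrongDual ℝ X}
    (hg : ∀ m s, |s| ≤ ε → g + s • ψ m ∈ K) :
    g ∈ szlenkDeriv ε K := by
  refine ⟨by simpa using hg 0 0 (by simpa using hε.le), fun U hU hgU => ?_⟩
  obtain ⟨m, hplus, hminus⟩ :=
    (((tendsto_toWeakDual_add_smul hψ g ε).eventually_mem (hU.mem_nhds hgU)).and
      ((tendsto_toWeakDual_add_smul hψ g (-ε)).eventually_mem (hU.mem_nhds hgU))).exists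
  have hdist : dist (g + ε • ψ m) (g + (-ε) • ψ m) = 2 * ε * ‖ψ m‖ := by
    rw [dist_eq_norm, show g + ε • ψ m - (g + (-ε) • ψ m) = (2 * ε) • ψ m by module,
      norm_smul, Real.norm_eq_abs, abs_of_pos (by linarith)]
  calc ε < 2 * ε * ‖ψ m‖ := by nlinarith [hψ_norm m]
    _ = dist (g + ε • ψ m) (g + (-ε) • ψ m) := hdist.symm
    _ ≤ Metric.diam {f | f ∈ K ∧ StrongDual.toWeakDual f ∈ U} :=
      Metric.dist_le_diam_of_mem (hK.subset fun f hf => hf.1)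
        ⟨hg m ε (abs_of_pos hε).le, hplus⟩ ⟨hg m (-ε) (by rw [abs_neg, abs_of_pos hε]), hminus⟩

lemma mem_szlenkDerivList_ofFn {K : Set (StrongDual ℝ X)} (hK : Bornology.IsBounded K) :
    ∀ {k : ℕ} (t : Fin k → ℝ) (ψ : Fin k → ℕ → StrongDual ℝ X), (∀ i, 0 < t i) →
    (∀ i, Tendsto (fun m => StrongDual.toWeakDual (ψ i m)) atTop (𝓝 0)) →
    (∀ i m, 1 / 2 < ‖ψ i m‖) → ∀ g : StrongDual ℝ X,
    (∀ (s : Fin k → ℝ) (m : Fin k → ℕ), (∀ i, |s i| ≤ t i) → g + ∑ i, s i • ψ i (m i) ∈ K) →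
    g ∈ szlenkDerivList (List.ofFn t) K
  | 0, _, _, _, _, _, g, hg => by
    simpa [szlenkDerivList] using hg finZeroElim finZeroElim finZeroElim
  | k + 1, t, ψ, ht, hψ, hψ_norm, g, hg => by
    rw [List.ofFn_succ]
    refine mem_szlenkDeriv_of_forall_add_smul_mem (hK.subset (szlenkDerivList_subset _ _))
      (ht 0) (hψ 0) (hψ_norm 0) fun m₀ s₀ hs₀ => ?_
    refine mem_szlenkDerivList_ofFn hK (fun i => t i.succ) (fun i => ψ i.succ) (fun i => ht _)
      (fun i => hψ _) (fun i => hψ_norm _) _ fun s m hs => ?_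
    simpa [Fin.sum_univ_succ, add_assoc] using
      hg (Fin.cons s₀ s) (Fin.cons m₀ m) (Fin.cases hs₀ hs)

end SzlenkDeriv

lemma ZeroAtInftyContinuousMap.exists_norm_le_one_apply_eq_one {α : Type*} [TopologicalSpace α]
    [DiscreteTopology α] [DecidableEq α] (a : α) : ∃ f : C₀(α, ℝ), ‖f‖ ≤ 1 ∧ f a = 1 := by
  let f : C₀(α, ℝ) :=
    ⟨⟨fun b => if b = a then 1 else 0, continuous_of_discreteTopology⟩, by
      rw [cocompact_eq_cofinite]
      exact tendsto_const_nhds.congr'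
        ((eventually_cofinite_ne a).mono fun b hb => (if_neg hb).symm)⟩
  refine ⟨f, (BoundedContinuousFunction.norm_le zero_le_one).2 fun b => ?_, if_pos rfl⟩
  show ‖if b = a then (1 : ℝ) else 0‖ ≤ 1
  split_ifs <;> simp

section DirectSum

variable {E : Type*} [NormedAddCommGroup E] [NormedSpace ℝ E] {e : ℕ → E} {e' : ℕ → StrongDual ℝ E}

/-- Flipping the signs of all coordinates but the `j`-th one gives `y` with `‖y‖ = ‖x‖` and
`x + y = 2 e'ⱼ(x) eⱼ`. -/
lemma IsBasis1Unconditional.abs_coord_le (hb : IsBasis1Unconditional e e')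
    (hnorm : ∀ n, ‖e n‖ = 1) (j : ℕ) (x : E) : |e' j x| ≤ ‖x‖ := by
  obtain ⟨y, hy, hy_norm⟩ := hb.unconditional x (fun n => if n = j then 1 else -1)
    fun n => by split_ifs <;> simp
  have hxy : x + y = (2 * e' j x) • e j := by
    refine ((hb.expansion x).add hy).unique ?_
    convert hasSum_ite_eq j ((2 * e' j x) • e j) using 1
    funext n
    split_ifs with h
    · subst h; module
    · module
  have : 2 * |e' j x| ≤ 2 * ‖x‖ :=
    calc 2 * |e' j x| = ‖x + y‖ := by
          rw [hxy, norm_smul, hnorm, mul_one, Real.norm_eq_abs, abs_mul, abs_two]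
      _ ≤ ‖x‖ + ‖y‖ := norm_add_le x y
      _ = 2 * ‖x‖ := by rw [hy_norm]; ring
  linarith

namespace IsDirectSumE

section

variable {X : ℕ → Type*} [∀ n, NormedAddCommGroup (X n)] [∀ n, NormedSpace ℝ (X n)]
  {Y : Type*} [NormedAddCommGroup Y] [NormedSpace ℝ Y] {T : Y →ₗ[ℝ] ∀ n, X n}

lemma summable (hT : IsDirectSumE e X T) (y : Y) : Summable fun n => ‖T y n‖ • e n :=
  hT.range_eq.subset ⟨y, rfl⟩

lemma coord_tsum (hb : IsBasis1Unconditional e e') (hT : IsDirectSumE e X T) (y : Y) (j : ℕ) :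
    e' j (∑' n, ‖T y n‖ • e n) = ‖T y j‖ := by
  rw [(e' j).map_tsum (hT.summable y)]
  simp_rw [map_smul, hb.biorth, smul_eq_mul, mul_ite, mul_one, mul_zero]
  exact tsum_ite_eq' j (fun n => ‖T y n‖)

lemma norm_apply_le (hb : IsBasis1Unconditional e e') (hnorm : ∀ n, ‖e n‖ = 1)
    (hT : IsDirectSumE e X T) (y : Y) (j : ℕ) : ‖T y j‖ ≤ ‖y‖ := by
  simpa [hT.coord_tsum hb, ← hT.norm_eq] using hb.abs_coord_le hnorm j (∑' n, ‖T y n‖ • e n)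

lemma sum_mul_norm_apply_le (hb : IsBasis1Unconditional e e') (hT : IsDirectSumE e X T)
    {k : ℕ} (t : Fin k → ℝ) (y : Y) :
    ∑ i, t i * ‖T y i‖ ≤ ‖∑ i, t i • e' i‖ * ‖y‖ :=
  calc ∑ i, t i * ‖T y i‖ = (∑ i, t i • e' i) (∑' n, ‖T y n‖ • e n) := by
        simp [hT.coord_tsum hb]
    _ ≤ ‖∑ i, t i • e' i‖ * ‖∑' n, ‖T y n‖ • e n‖ :=
        (le_abs_self _).trans ((∑ i, t i • e' i).le_opNorm _)
    _ = ‖∑ i, t i • e' i‖ * ‖y‖ := by rw [hT.norm_eq]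

lemma exists_apply_eq_single (hnorm : ∀ n, ‖e n‖ = 1) (hT : IsDirectSumE e X T) (j : ℕ)
    (x : X j) : ∃ y, T y = Pi.single j x ∧ ‖y‖ = ‖x‖ := by
  have hsingle : (fun n => ‖(Pi.single j x : ∀ n, X n) n‖ • e n) = Pi.single j (‖x‖ • e j) := by
    funext n
    by_cases h : n = j
    · subst h; simp
    · simp [h]
  obtain ⟨y, hy⟩ : Pi.single j x ∈ Set.range T := by
    rw [hT.range_eq, Set.mem_ofPred_eq, hsingle]
    exact summable_of_ne_finset_zero (s := {j}) fun n hn => by simp_all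
  refine ⟨y, hy, ?_⟩
  rw [hT.norm_eq, hy, hsingle, tsum_pi_single, norm_smul, hnorm, mul_one, norm_norm]

end

section

variable {Y : Type*} [NormedAddCommGroup Y] [NormedSpace ℝ Y] {T : Y →ₗ[ℝ] ℕ → C₀(ℕ, ℝ)}

def coordDual (hT : IsDirectSumE e (fun _ => C₀(ℕ, ℝ)) T) (hb : IsBasis1Unconditional e e')
    (hnorm : ∀ n, ‖e n‖ = 1) (j m : ℕ) : StrongDual ℝ Y :=
  LinearMap.mkContinuous
    { toFun := fun y => T y j m
      map_add' := fun y z => by simp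
      map_smul' := fun c y => by simp }
    1 fun y => by
      rw [one_mul]
      exact ((T y j).toBCF.norm_coe_le_norm m).trans (hT.norm_apply_le hb hnorm y j)

variable (hT : IsDirectSumE e (fun _ => C₀(ℕ, ℝ)) T) (hb : IsBasis1Unconditional e e')
  (hnorm : ∀ n, ‖e n‖ = 1)

@[simp]
lemma coordDual_apply (j m : ℕ) (y : Y) : hT.coordDual hb hnorm j m y = T y j m := rfl

lemma tendsto_toWeakDual_coordDual (j : ℕ) :
    Tendsto (fun m => StrongDual.toWeakDual (hT.coordDual hb hnorm j m)) atTop (𝓝 0) := by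
  refine tendsto_iff_forall_eval_tendsto_topDualPairing.2 fun y => ?_
  rw [← cocompact_eq_atTop]
  exact (T y j).zero_at_infty'

lemma one_le_norm_coordDual (j m : ℕ) : 1 ≤ ‖hT.coordDual hb hnorm j m‖ := by
  obtain ⟨f, hf_norm, hf⟩ := ZeroAtInftyContinuousMap.exists_norm_le_one_apply_eq_one m
  obtain ⟨y, hy, hy_norm⟩ := hT.exists_apply_eq_single hnorm j f
  calc 1 = hT.coordDual hb hnorm j m y := by simp [hy, hf]
    _ ≤ ‖hT.coordDual hb hnorm j m‖ * ‖y‖ :=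
      (le_abs_self _).trans ((hT.coordDual hb hnorm j m).le_opNorm y)
    _ ≤ ‖hT.coordDual hb hnorm j m‖ := by
      rw [hy_norm]
      exact mul_le_of_le_one_right (norm_nonneg _) hf_norm

lemma norm_sum_smul_coordDual_le {k : ℕ} (t s : Fin k → ℝ) (m : Fin k → ℕ)
    (hs : ∀ i, |s i| ≤ t i) :
    ‖∑ i, s i • hT.coordDual hb hnorm i (m i)‖ ≤ ‖∑ i, t i • e' i‖ := by
  refine ContinuousLinearMap.opNorm_le_bound _ (norm_nonneg _) fun y => ?_
  calc ‖(∑ i, s i • hT.coordDual hb hnorm i (m i)) y‖ = |∑ i, s i * T y i (m i)| := by simp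
    _ ≤ ∑ i, t i * ‖T y i‖ := (Finset.abs_sum_le_sum_abs _ _).trans <|
      Finset.sum_le_sum fun i _ => by
        rw [abs_mul]
        exact mul_le_mul (hs i) ((T y i).toBCF.norm_coe_le_norm (m i)) (abs_nonneg _)
          ((abs_nonneg _).trans (hs i))
    _ ≤ ‖∑ i, t i • e' i‖ * ‖y‖ := hT.sum_mul_norm_apply_le hb t y

end

end IsDirectSumE

end DirectSum

theorem szlenkDerivList_nonempty_of_dual_vector_general
    (E : Type*) [NormedAddCommGroup E] [NormedSpace ℝ E]
    (e : ℕ → E) (e' : ℕ → StrongDual ℝ E)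
    (hb : IsBasis1Unconditional e e') (hnorm : ∀ n, ‖e n‖ = 1)
    (Y : Type*) [NormedAddCommGroup Y] [NormedSpace ℝ Y]
    (T : Y →ₗ[ℝ] ∀ _ : ℕ, ZeroAtInftyContinuousMap ℕ ℝ)
    (hT : IsDirectSumE e (fun _ => ZeroAtInftyContinuousMap ℕ ℝ) T)
    (k : ℕ) (t : Fin k → ℝ) (ht : ∀ i, 0 < t i)
    (hle : ‖∑ i, t i • e' i.1‖ ≤ 1) :
    (szlenkDerivList (List.ofFn t) (dualUnitBall Y)).Nonempty := by
  refine ⟨0, mem_szlenkDerivList_ofFn Metric.isBounded_closedBall t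
    (fun i => hT.coordDual hb hnorm i) ht (fun i => hT.tendsto_toWeakDual_coordDual hb hnorm i)
    (fun i m => by linarith [hT.one_le_norm_coordDual hb hnorm i m]) 0 fun s m hs => ?_⟩
  rw [zero_add, mem_closedBall_zero_iff]
  exact (hT.norm_sum_smul_coordDual_le hb hnorm t s m hs).trans hle

/-- Let `X = (⊕ₙ c₀)_E`. If `t₁, …, t_k > 0` satisfy `‖Σᵢ tᵢ eᵢ*‖_{E*} ≤ 1`,
then `ι_{t₁}⋯ι_{t_k} B_{X*} ≠ ∅`. -/
theorem szlenkDerivList_nonempty_of_dual_vector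
    (E : Type*) [NormedAddCommGroup E] [NormedSpace ℝ E] [CompleteSpace E]
    (e : ℕ → E) (e' : ℕ → StrongDual ℝ E)
    (hb : IsBasis1Unconditional e e') (hnorm : ∀ n, ‖e n‖ = 1)
    (Y : Type*) [NormedAddCommGroup Y] [NormedSpace ℝ Y] [CompleteSpace Y]
    (T : Y →ₗ[ℝ] ∀ _ : ℕ, ZeroAtInftyContinuousMap ℕ ℝ)
    (hT : IsDirectSumE e (fun _ => ZeroAtInftyContinuousMap ℕ ℝ) T)
    (k : ℕ) (t : Fin k → ℝ) (ht : ∀ i, 0 < t i)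
    (hle : ‖∑ i, t i • e' i.1‖ ≤ 1) :
    (szlenkDerivList (List.ofFn t) (dualUnitBall Y)).Nonempty :=
  szlenkDerivList_nonempty_of_dual_vector_general E e e' hb hnorm Y T hT k t ht hle
end

section
/- Let E be a Banach space with a normalized, shrinking, 1-unconditional basis (e_n) such that the dual E* is C-asymptotic ℓ_p with respect to the biorthogonal sequence (e_n*), for some p ∈ [1,∞) and C ≥ 1. Then for every ε ∈ (0, 1/C) one has Sz(E,ε) > ⌊(Cε)^{-p}⌋; i.e., ι_ε^N B_{E*} ≠ ∅ for N = ⌊(Cε)^{-p}⌋. -/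
open Filter Topology Set
open scoped ENNReal NNReal

/-! Every sum `Σ_{m ∈ S} aₘ e*ₘ` with `|aₘ| ≤ ε`, over `#S ≤ N = ⌊(Cε)^{-p}⌋` coordinates
`m ≥ N`, is a block sequence in `E*`, so the upper `ℓ_p` estimate puts it in the unit ball:
its norm is at most `C #S^{1/p} ε ≤ 1`. Since `e*ₜ → 0` weak*, such a sum `f` with
`#S + k < N` is the weak* limit of the pairs `f ± ε e*ₜ` (`t → ∞`), which are `2ε` apart and,
by induction on `k`, lie in `ι_ε^k B_{E*}`; hence `f ∈ ι_ε^{k+1} B_{E*}`. Taking `S = ∅` and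
`k = N` gives `0 ∈ ι_ε^N B_{E*}`. -/

section SzlenkDerivation

variable {X : Type*} [NormedAddCommGroup X] [NormedSpace ℝ X] {ε : ℝ}

theorem szlenkDeriv_subset (K : Set (StrongDual ℝ X)) : szlenkDeriv ε K ⊆ K :=
  fun _ hf => hf.1

theorem iterate_szlenkDeriv_subset (K : Set (StrongDual ℝ X)) (k : ℕ) :
    (szlenkDeriv ε)^[k] K ⊆ K := by
  induction k with
  | zero => exact subset_rfl
  | succ k ih =>
    rw [Function.iterate_succ_apply']
    exact (szlenkDeriv_subset _).trans ih

theorem mem_szlenkDeriv_of_tendsto {ι : Type*} {l : Filter ι} [l.NeBot]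
    {K : Set (StrongDual ℝ X)} (hK : Bornology.IsBounded K) {f : StrongDual ℝ X} (hf : f ∈ K)
    {g h : ι → StrongDual ℝ X}
    (hg : Tendsto (fun i => StrongDual.toWeakDual (g i)) l (𝓝 (StrongDual.toWeakDual f)))
    (hh : Tendsto (fun i => StrongDual.toWeakDual (h i)) l (𝓝 (StrongDual.toWeakDual f)))
    (hgh : ∀ᶠ i in l, g i ∈ K ∧ h i ∈ K ∧ ε < dist (g i) (h i)) :
    f ∈ szlenkDeriv ε K := by
  refine ⟨hf, fun U hU hfU => ?_⟩
  obtain ⟨i, hgU, hhU, hgK, hhK, hdist⟩ :=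
    ((hg.eventually_mem (hU.mem_nhds hfU)).and
      ((hh.eventually_mem (hU.mem_nhds hfU)).and hgh)).exists
  exact hdist.trans_le <| Metric.dist_le_diam_of_mem (hK.subset fun _ hx => hx.1)
    ⟨hgK, hgU⟩ ⟨hhK, hhU⟩

end SzlenkDerivation

theorem pNorm_ofReal_le_of_abs_le {p : ℝ} (hp : 0 < p) {ι : Type*} [Fintype ι] {a : ι → ℝ}
    {b : ℝ} (hb : 0 ≤ b) (hab : ∀ i, |a i| ≤ b) :
    pNorm (ENNReal.ofReal p) a ≤ (Fintype.card ι : ℝ) ^ (1 / p) * b := by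
  rw [pNorm, if_neg ENNReal.ofReal_ne_top, ENNReal.toReal_ofReal hp.le]
  have hsum : ∑ i, |a i| ^ p ≤ Fintype.card ι * b ^ p := by
    calc ∑ i, |a i| ^ p ≤ ∑ _i : ι, b ^ p := Finset.sum_le_sum fun i _ =>
          Real.rpow_le_rpow (abs_nonneg (a i)) (hab i) hp.le
      _ = Fintype.card ι * b ^ p := by simp
  calc (∑ i, |a i| ^ p) ^ (1 / p) ≤ (Fintype.card ι * b ^ p) ^ (1 / p) :=
        Real.rpow_le_rpow (by positivity) hsum (by positivity)
    _ = (Fintype.card ι : ℝ) ^ (1 / p) * b := by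
        rw [Real.mul_rpow (by positivity) (by positivity), ← Real.rpow_mul hb,
          mul_one_div_cancel hp.ne', Real.rpow_one]

theorem IsAsymptoticLp.norm_sum_le_of_strictMono {p : ℝ≥0∞} {C : ℝ} {Z : Type*}
    [NormedAddCommGroup Z] {coord : ℕ → Z → ℝ} (hasym : IsAsymptoticLp p C coord)
    {n : ℕ} {m : Fin n → ℕ} (hm : StrictMono m) (hmn : ∀ j, n ≤ m j + 1) (x : Fin n → Z)
    (hx : ∀ j i, coord i (x j) ≠ 0 → i = m j) :
    ‖∑ j, x j‖ ≤ C * pNorm p (fun j => ‖x j‖) := by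
  refine (hasym n x (fun j => (Set.finite_singleton (m j)).subset (hx j))
    (fun j i hi => hx j i hi ▸ hmn j) (fun j k hjk i i' hi hi' => ?_)).2
  rw [hx j i hi, hx k i' hi']
  exact hm hjk

namespace IsBasis1Unconditional

variable {E : Type*} [NormedAddCommGroup E] [NormedSpace ℝ E]
  {e : ℕ → E} {e' : ℕ → StrongDual ℝ E}

/-- Flipping the sign of the `m`-th coordinate moves `x` by `2 e'ₘ(x) eₘ` without changing
its norm. -/
theorem abs_coord_le_s11 (hb : IsBasis1Unconditional e e') (hnorm : ∀ n, ‖e n‖ = 1) (m : ℕ)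
    (x : E) : |e' m x| ≤ ‖x‖ := by
  obtain ⟨y, hy, hyx⟩ := hb.unconditional x (fun n => if n = m then -1 else 1)
    (fun n => by split_ifs <;> simp)
  have hxy : x - y = (2 * e' m x) • e m := by
    refine ((hb.expansion x).sub hy).unique ?_
    convert hasSum_ite_eq m ((2 * e' m x) • e m) using 2 with n
    split_ifs with h
    · subst h; module
    · simp
  have h2 : 2 * |e' m x| ≤ 2 * ‖x‖ := by
    calc 2 * |e' m x| = ‖x - y‖ := by
          rw [hxy, norm_smul, hnorm, mul_one, Real.norm_eq_abs, abs_mul, abs_two]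
      _ ≤ ‖x‖ + ‖y‖ := norm_sub_le x y
      _ = 2 * ‖x‖ := by rw [hyx]; ring
  linarith

theorem norm_coord (hb : IsBasis1Unconditional e e') (hnorm : ∀ n, ‖e n‖ = 1) (m : ℕ) :
    ‖e' m‖ = 1 := by
  refine le_antisymm ((e' m).opNorm_le_bound zero_le_one fun x => ?_) ?_
  · simpa using hb.abs_coord_le_s11 hnorm m x
  · simpa [hnorm, hb.biorth] using (e' m).le_opNorm (e m)

theorem tendsto_toWeakDual_coord (hb : IsBasis1Unconditional e e') (hnorm : ∀ n, ‖e n‖ = 1) :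
    Tendsto (fun n => StrongDual.toWeakDual (e' n)) atTop (𝓝 0) := by
  rw [tendsto_iff_forall_eval_tendsto_topDualPairing]
  intro x
  have h := tendsto_zero_iff_norm_tendsto_zero.mp (hb.expansion x).summable.tendsto_atTop_zero
  simp only [norm_smul, hnorm, mul_one] at h
  exact tendsto_zero_iff_norm_tendsto_zero.mpr h

theorem tendsto_toWeakDual_add_smul_coord (hb : IsBasis1Unconditional e e')
    (hnorm : ∀ n, ‖e n‖ = 1) (f : StrongDual ℝ E) (c : ℝ) :
    Tendsto (fun n => StrongDual.toWeakDual (f + c • e' n)) atTop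
      (𝓝 (StrongDual.toWeakDual f)) := by
  simpa using tendsto_const_nhds.add ((hb.tendsto_toWeakDual_coord hnorm).const_smul c)

theorem norm_sum_smul_coord_le (hb : IsBasis1Unconditional e e') (hnorm : ∀ n, ‖e n‖ = 1)
    {p : ℝ} (hp : 0 < p) {C : ℝ} (hC : 0 ≤ C)
    (hasym : IsAsymptoticLp (ENNReal.ofReal p) C (fun n (f : StrongDual ℝ E) => f (e n)))
    {S : Finset ℕ} (hS : ∀ m ∈ S, S.card ≤ m + 1) {a : ℕ → ℝ} {r : ℝ} (hr : 0 ≤ r)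
    (ha : ∀ m ∈ S, |a m| ≤ r) :
    ‖∑ m ∈ S, a m • e' m‖ ≤ C * (S.card : ℝ) ^ (1 / p) * r := by
  set emb := S.orderEmbOfFin rfl
  have hemb : ∀ j, emb j ∈ S := S.orderEmbOfFin_mem rfl
  have hsum : ∑ m ∈ S, a m • e' m = ∑ j, a (emb j) • e' (emb j) := by
    have h := Finset.sum_map Finset.univ emb.toEmbedding fun m => a m • e' m
    rwa [S.map_orderEmbOfFin_univ rfl] at h
  have hsupp : ∀ j i, (a (emb j) • e' (emb j)) (e i) ≠ 0 → i = emb j := by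
    intro j i hi
    by_contra h
    simp [hb.biorth, Ne.symm h] at hi
  have hnorm_le : ∀ j, |‖a (emb j) • e' (emb j)‖| ≤ r := by
    intro j
    simpa [norm_smul, hb.norm_coord hnorm] using ha _ (hemb j)
  calc ‖∑ m ∈ S, a m • e' m‖
      ≤ C * pNorm (ENNReal.ofReal p) (fun j => ‖a (emb j) • e' (emb j)‖) := by
        rw [hsum]
        exact hasym.norm_sum_le_of_strictMono emb.strictMono (fun j => hS _ (hemb j)) _ hsupp
    _ ≤ C * ((S.card : ℝ) ^ (1 / p) * r) := by
        gcongr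
        simpa using pNorm_ofReal_le_of_abs_le hp hr hnorm_le
    _ = C * (S.card : ℝ) ^ (1 / p) * r := by ring

theorem sum_smul_coord_mem_dualUnitBall (hb : IsBasis1Unconditional e e')
    (hnorm : ∀ n, ‖e n‖ = 1) {p : ℝ} (hp : 0 < p) {C : ℝ} (hC : 0 < C)
    (hasym : IsAsymptoticLp (ENNReal.ofReal p) C (fun n (f : StrongDual ℝ E) => f (e n)))
    {ε : ℝ} (hε : 0 < ε) {S : Finset ℕ} (hS : (S.card : ℝ) ≤ (C * ε) ^ (-p))
    (hSm : ∀ m ∈ S, S.card ≤ m + 1) {a : ℕ → ℝ} (ha : ∀ m ∈ S, |a m| ≤ ε) :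
    ∑ m ∈ S, a m • e' m ∈ dualUnitBall E := by
  have hcard : (S.card : ℝ) ^ (1 / p) ≤ (C * ε)⁻¹ := by
    rwa [one_div, Real.rpow_inv_le_iff_of_pos (by positivity) (by positivity) hp,
      Real.inv_rpow (by positivity), ← Real.rpow_neg (by positivity)]
  rw [dualUnitBall, mem_closedBall_zero_iff]
  calc ‖∑ m ∈ S, a m • e' m‖ ≤ C * (S.card : ℝ) ^ (1 / p) * ε :=
        hb.norm_sum_smul_coord_le hnorm hp hC.le hasym hSm hε.le ha
    _ ≤ C * (C * ε)⁻¹ * ε := by gcongr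
    _ = 1 := by field_simp

theorem sum_smul_coord_mem_iterate_szlenkDeriv (hb : IsBasis1Unconditional e e')
    (hnorm : ∀ n, ‖e n‖ = 1) {p : ℝ} (hp : 0 < p) {C : ℝ} (hC : 0 < C)
    (hasym : IsAsymptoticLp (ENNReal.ofReal p) C (fun n (f : StrongDual ℝ E) => f (e n)))
    {ε : ℝ} (hε : 0 < ε) {N : ℕ} (hN : (N : ℝ) ≤ (C * ε) ^ (-p)) (k : ℕ) :
    ∀ S : Finset ℕ, S.card + k ≤ N → (∀ m ∈ S, N ≤ m) → ∀ a : ℕ → ℝ, (∀ m ∈ S, |a m| ≤ ε) →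
      ∑ m ∈ S, a m • e' m ∈ (szlenkDeriv ε)^[k] (dualUnitBall E) := by
  induction k with
  | zero =>
    intro S hS hSN a ha
    exact hb.sum_smul_coord_mem_dualUnitBall hnorm hp hC hasym hε
      (le_trans (by exact_mod_cast (by omega : S.card ≤ N)) hN)
      (fun m hm => by have := hSN m hm; omega) ha
  | succ k ih =>
    intro S hS hSN a ha
    set f := ∑ m ∈ S, a m • e' m
    have hperturb : ∀ t, N ≤ t → t ∉ S → ∀ c, |c| ≤ ε →
        f + c • e' t ∈ (szlenkDeriv ε)^[k] (dualUnitBall E) := by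
      intro t htN ht c hc
      have hsum : ∑ m ∈ insert t S, Function.update a t c m • e' m = f + c • e' t := by
        rw [Finset.sum_insert ht, Function.update_self, add_comm]
        exact congrArg (· + _) <| Finset.sum_congr rfl fun m hm => by
          rw [Function.update_of_ne (ne_of_mem_of_not_mem hm ht)]
      rw [← hsum]
      refine ih (insert t S) (by rw [Finset.card_insert_of_notMem ht]; omega)
        (Finset.forall_mem_insert _ _ _ |>.mpr ⟨htN, hSN⟩) _
        (Finset.forall_mem_insert _ _ _ |>.mpr ⟨by simpa using hc, fun m hm => ?_⟩)
      rw [Function.update_of_ne (ne_of_mem_of_not_mem hm ht)]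
      exact ha m hm
    rw [Function.iterate_succ_apply']
    refine mem_szlenkDeriv_of_tendsto (l := atTop)
      (Metric.isBounded_closedBall.subset (iterate_szlenkDeriv_subset _ k))
      (ih S (by omega) hSN a ha) (hb.tendsto_toWeakDual_add_smul_coord hnorm f ε)
      (hb.tendsto_toWeakDual_add_smul_coord hnorm f (-ε)) ?_
    filter_upwards [eventually_ge_atTop N, Nat.cofinite_eq_atTop ▸ S.eventually_cofinite_notMem]
      with t htN ht
    refine ⟨hperturb t htN ht ε (abs_of_pos hε).le,
      hperturb t htN ht (-ε) (by rw [abs_neg, abs_of_pos hε]), ?_⟩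
    have hdiff : f + ε • e' t - (f + (-ε) • e' t) = (2 * ε) • e' t := by module
    rw [dist_eq_norm, hdiff, norm_smul, hb.norm_coord hnorm, mul_one, Real.norm_eq_abs,
      abs_of_pos (by linarith)]
    linarith

end IsBasis1Unconditional

theorem szlenkIdx_lower_of_dual_asymptoticLp_general
    (E : Type*) [NormedAddCommGroup E] [NormedSpace ℝ E]
    (e : ℕ → E) (e' : ℕ → StrongDual ℝ E)
    (hb : IsBasis1Unconditional e e') (hnorm : ∀ n, ‖e n‖ = 1)
    (p : ℝ) (hp : 1 ≤ p) (C : ℝ) (hC : 1 ≤ C)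
    (hasym : IsAsymptoticLp (ENNReal.ofReal p) C
      (fun n (f : StrongDual ℝ E) => f (e n)))
    (ε : ℝ) (hε : ε ∈ Set.Ioo (0:ℝ) (1/C)) :
    ((szlenkDeriv ε)^[⌊(C * ε) ^ (-p)⌋₊] (dualUnitBall E)).Nonempty := by
  obtain ⟨hε0, -⟩ := hε
  have hC0 : 0 < C := by linarith
  set N := ⌊(C * ε) ^ (-p)⌋₊
  have hN : (N : ℝ) ≤ (C * ε) ^ (-p) := Nat.floor_le (by positivity)
  have hzero := hb.sum_smul_coord_mem_iterate_szlenkDeriv hnorm (by linarith) hC0 hasym hε0 hN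
    N ∅ (by simp) (by simp) 0 (by simp)
  exact ⟨_, hzero⟩

/-- If `E*` is `C`-asymptotic `ℓ_p` with respect to the dual basis, then for
every `ε ∈ (0, 1/C)` one has `ι_ε^N B_{E*} ≠ ∅` for `N = ⌊(Cε)^{-p}⌋`, i.e.
`Sz(E,ε) > ⌊(Cε)^{-p}⌋`. -/
theorem szlenkIdx_lower_of_dual_asymptoticLp
    (E : Type*) [NormedAddCommGroup E] [NormedSpace ℝ E] [CompleteSpace E]
    (e : ℕ → E) (e' : ℕ → StrongDual ℝ E)
    (hb : IsBasis1Unconditional e e') (hnorm : ∀ n, ‖e n‖ = 1) (hshr : ShrinkingBasis e)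
    (p : ℝ) (hp : 1 ≤ p) (C : ℝ) (hC : 1 ≤ C)
    (hasym : IsAsymptoticLp (ENNReal.ofReal p) C
      (fun n (f : StrongDual ℝ E) => f (e n)))
    (ε : ℝ) (hε : ε ∈ Set.Ioo (0:ℝ) (1/C)) :
    ((szlenkDeriv ε)^[⌊(C * ε) ^ (-p)⌋₊] (dualUnitBall E)).Nonempty :=
  szlenkIdx_lower_of_dual_asymptoticLp_general E e e' hb hnorm p hp C hC hasym ε hε
end
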